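/- In M_greedy, a buyer never benefits from delaying his arrival: fix the asks and the other bids in their arrival order, and consider a buyer with value v. If inserting his bid at position p′ in the arrival sequence and at a later position p > p′ (with the relative order of all other bids unchanged), then his utility when arriving at position p′ is at least his utility when arriving at position p; in particular, if he is matched when arriving at position p then he is also matched when arriving at position p′, with a payment that is no larger. -/

import Mathlib

/-- Extract the minimum-value unmatched ask from a list, with a fixed
tie-breaking rule (earlier list positions are preferred). Returns the
minimum together with the remaining list. -/
noncomputable def extractMin : List ℝ → Option (ℝ × List ℝ)
  | [] => none
  | a :: as =>
    match extractMin as with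
    | none => some (a, [])
    | some (m, rest) => if a ≤ m then some (a, as) else some (m, a :: rest)

/-- State of the Best-first (greedy) allocation: the currently unmatched asks,
the matched (ask, bid) pairs in match order, and the unmatched bids. -/
structure BfState where
  unmatchedAsks : List ℝ
  matched : List (ℝ × ℝ)
  unmatchedBids : List ℝ

/-- One step of the Best-first allocation: when bid `b` arrives, match it to the
minimum unmatched ask `a` if `a ≤ b`; otherwise leave `b` unmatched. -/
noncomputable def bfStep (s : BfState) (b : ℝ) : BfState :=
  match extractMin s.unmatchedAsks with
  | some (a, rest) =>
      if a ≤ b then ⟨rest, s.matched ++ [(a, b)], s.unmatchedBids⟩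
      else ⟨s.unmatchedAsks, s.matched, s.unmatchedBids ++ [b]⟩
  | none => ⟨s.unmatchedAsks, s.matched, s.unmatchedBids ++ [b]⟩

/-- Run the Best-first allocation on the bids in arrival order. -/
noncomputable def bfRun (asks bids : List ℝ) : BfState :=
  bids.foldl bfStep ⟨asks, [], []⟩

/-- Insertion into an ascending-sorted list. -/
noncomputable def insertAsc (x : ℝ) : List ℝ → List ℝ
  | [] => [x]
  | y :: ys => if x ≤ y then x :: y :: ys else y :: insertAsc x ys

/-- Sort a list of reals in ascending order. -/
noncomputable def sortAsc (l : List ℝ) : List ℝ := l.foldr insertAsc []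

/-- Sort a list of reals in descending order. -/
noncomputable def sortDesc (l : List ℝ) : List ℝ := (sortAsc l).reverse

/-- Match the i-th element of the first list with the i-th element of the
second, stopping as soon as a pair is not matchable (`a ≤ b` fails). -/
noncomputable def matchPrefix : List ℝ → List ℝ → List (ℝ × ℝ)
  | a :: as, b :: bs => if a ≤ b then (a, b) :: matchPrefix as bs else []
  | _, _ => []

/-- The optimal allocation: match the highest bid with the lowest ask, the
second highest bid with the second lowest ask, and so on, stopping as soon as
a pair is not matchable. -/
noncomputable def optPairs (asks bids : List ℝ) : List (ℝ × ℝ) :=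
  matchPrefix (sortAsc asks) (sortDesc bids)

/-- A feasible allocation: a partial matching (multiset of (ask, bid) pairs)
using each ask and each bid at most once, with `a ≤ b` for every matched pair. -/
def IsFeasible (asks bids : List ℝ) (M : Multiset (ℝ × ℝ)) : Prop :=
  M.map Prod.fst ≤ (asks : Multiset ℝ) ∧
  M.map Prod.snd ≤ (bids : Multiset ℝ) ∧
  ∀ p ∈ M, p.1 ≤ p.2

/-- Social welfare of an allocation: sum of matched bid values plus the sum of
the values of the unmatched asks. -/
noncomputable def welfare (asks : List ℝ) (M : Multiset (ℝ × ℝ)) : ℝ :=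
  (M.map Prod.snd).sum + ((asks : Multiset ℝ) - M.map Prod.fst).sum

/-- Social welfare of the Best-first allocation. -/
noncomputable def bfWelfare (asks bids : List ℝ) : ℝ :=
  ((bfRun asks bids).matched.map Prod.snd).sum + (bfRun asks bids).unmatchedAsks.sum

/-- Maximum social welfare over all feasible allocations. -/
noncomputable def OptW (asks bids : List ℝ) : ℝ :=
  sSup {w : ℝ | ∃ M : Multiset (ℝ × ℝ), IsFeasible asks bids M ∧ w = welfare asks M}

/-- Utility of a buyer with true value `trueV` who reports `report` and whose
bid arrives right after the bids `before` have been processed: he is matched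
to the minimum unmatched ask `a` at his arrival iff `a ≤ report`, in which
case he pays `a`; otherwise his utility is 0. -/
noncomputable def buyerUtil (asks before : List ℝ) (report trueV : ℝ) : ℝ :=
  match extractMin (bfRun asks before).unmatchedAsks with
  | some (a, _) => if a ≤ report then trueV - a else 0
  | none => 0

/-- A bid of value `r` arriving right after the bids `before` is matched by
the Best-first allocation. -/
def bfMatchedAt (asks before : List ℝ) (r : ℝ) : Prop :=
  match extractMin (bfRun asks before).unmatchedAsks with
  | some (a, _) => a ≤ r
  | none => False


/-!
The pool of unmatched asks only shrinks as bids arrive, so the minimum ask a buyer faces can only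
grow with his arrival time. A truthful buyer's utility is `v - a` if the minimum ask `a` is at most
`v` and `0` otherwise, which is antitone in `a`.
-/

lemma extractMin_eq_none_iff {l : List ℝ} : extractMin l = none ↔ l = [] := by
  refine ⟨fun h => ?_, fun h => h ▸ rfl⟩
  cases l with
  | nil => rfl
  | cons y ys =>
    rw [extractMin] at h
    split at h
    · exact absurd h (Option.some_ne_none _)
    · split_ifs at h

lemma extractMin_eq_some_perm {l rest : List ℝ} {a : ℝ} (h : extractMin l = some (a, rest)) :
    (a :: rest).Perm l := by
  induction l generalizing a rest with
  | nil => simp [extractMin] at h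
  | cons y ys ih =>
    rw [extractMin] at h
    rcases hys : extractMin ys with _ | ⟨m, rest'⟩
    · simp only [hys, Option.some.injEq, Prod.mk.injEq] at h
      obtain ⟨rfl, rfl⟩ := h
      rw [extractMin_eq_none_iff.mp hys]
    · simp only [hys] at h
      split_ifs at h <;> simp only [Option.some.injEq, Prod.mk.injEq] at h <;>
        obtain ⟨rfl, rfl⟩ := h
      · rfl
      · exact (List.Perm.swap _ _ _).trans ((ih hys).cons y)

lemma mem_of_extractMin_eq_some {l rest : List ℝ} {a : ℝ} (h : extractMin l = some (a, rest)) :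
    a ∈ l :=
  (extractMin_eq_some_perm h).subset List.mem_cons_self

lemma extractMin_eq_some_le {l rest : List ℝ} {a : ℝ} (h : extractMin l = some (a, rest)) :
    ∀ x ∈ l, a ≤ x := by
  induction l generalizing a rest with
  | nil => simp [extractMin] at h
  | cons y ys ih =>
    rw [extractMin] at h
    rcases hys : extractMin ys with _ | ⟨m, rest'⟩
    · simp only [hys, Option.some.injEq, Prod.mk.injEq] at h
      obtain ⟨rfl, rfl⟩ := h
      simp [extractMin_eq_none_iff.mp hys]
    · simp only [hys] at h
      have hm := ih hys
      split_ifs at h with hym <;> simp only [Option.some.injEq, Prod.mk.injEq] at h <;>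
        obtain ⟨rfl, rfl⟩ := h
      · exact List.forall_mem_cons.mpr ⟨le_rfl, fun x hx => hym.trans (hm x hx)⟩
      · exact List.forall_mem_cons.mpr ⟨(not_le.mp hym).le, hm⟩

lemma exists_extractMin_le_of_mem {l : List ℝ} {x : ℝ} (hx : x ∈ l) :
    ∃ a rest, extractMin l = some (a, rest) ∧ a ≤ x := by
  rcases h : extractMin l with _ | ⟨a, rest⟩
  · exact absurd (extractMin_eq_none_iff.mp h) (List.ne_nil_of_mem hx)
  · exact ⟨a, rest, rfl, extractMin_eq_some_le h x hx⟩

lemma extractMin_fst_le_of_subset {l l' : List ℝ} (hsub : l' ⊆ l) :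
    ∀ a ∈ (extractMin l').map Prod.fst, ∀ a' ∈ (extractMin l).map Prod.fst, a' ≤ a := by
  simp only [Option.mem_def, Option.map_eq_some_iff, Prod.exists, exists_and_right,
    exists_eq_right]
  rintro a ⟨rest, h⟩ a' ⟨rest', h'⟩
  exact extractMin_eq_some_le h' a (hsub (mem_of_extractMin_eq_some h))

lemma bfStep_unmatchedAsks_subset (s : BfState) (b : ℝ) :
    (bfStep s b).unmatchedAsks ⊆ s.unmatchedAsks := by
  unfold bfStep
  rcases h : extractMin s.unmatchedAsks with _ | ⟨a, rest⟩
  · exact List.Subset.refl _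
  · dsimp only
    split_ifs
    · exact List.Subset.trans (List.subset_cons_self a rest) (extractMin_eq_some_perm h).subset
    · exact List.Subset.refl _

lemma foldl_bfStep_unmatchedAsks_subset (bids : List ℝ) (s : BfState) :
    (bids.foldl bfStep s).unmatchedAsks ⊆ s.unmatchedAsks := by
  induction bids generalizing s with
  | nil => exact List.Subset.refl _
  | cons b bs ih => exact List.Subset.trans (ih (bfStep s b)) (bfStep_unmatchedAsks_subset s b)

lemma bfRun_append_unmatchedAsks_subset (asks bids bids' : List ℝ) :
    (bfRun asks (bids ++ bids')).unmatchedAsks ⊆ (bfRun asks bids).unmatchedAsks := by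
  rw [bfRun, bfRun, List.foldl_append]
  exact foldl_bfStep_unmatchedAsks_subset bids' _

lemma bfRun_take_unmatchedAsks_subset_of_le (asks bids : List ℝ) {m n : ℕ} (hmn : m ≤ n) :
    (bfRun asks (bids.take n)).unmatchedAsks ⊆ (bfRun asks (bids.take m)).unmatchedAsks := by
  rw [← Nat.add_sub_cancel' hmn, List.take_add]
  exact bfRun_append_unmatchedAsks_subset _ _ _

lemma buyerUtil_self_nonneg (asks before : List ℝ) (v : ℝ) : 0 ≤ buyerUtil asks before v v := by
  unfold buyerUtil
  split
  · split_ifs with h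
    · exact sub_nonneg.mpr h
    · exact le_rfl
  · exact le_rfl

section PoolSubset

variable {asks before before' : List ℝ}

lemma buyerUtil_le_of_subset
    (hsub : (bfRun asks before').unmatchedAsks ⊆ (bfRun asks before).unmatchedAsks) (v : ℝ) :
    buyerUtil asks before' v v ≤ buyerUtil asks before v v := by
  rcases h' : extractMin (bfRun asks before').unmatchedAsks with _ | ⟨a, rest⟩
  · rw [buyerUtil, h']
    exact buyerUtil_self_nonneg asks before v
  · obtain ⟨a', rest', h, ha'⟩ :=
      exists_extractMin_le_of_mem (hsub (mem_of_extractMin_eq_some h'))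
    by_cases hav : a ≤ v
    · simp only [buyerUtil, h, h', if_pos hav, if_pos (ha'.trans hav)]
      linarith
    · simpa only [buyerUtil, h', if_neg hav] using buyerUtil_self_nonneg asks before v

lemma bfMatchedAt_of_subset
    (hsub : (bfRun asks before').unmatchedAsks ⊆ (bfRun asks before).unmatchedAsks) {v : ℝ}
    (hmatch : bfMatchedAt asks before' v) :
    bfMatchedAt asks before v := by
  rcases h' : extractMin (bfRun asks before').unmatchedAsks with _ | ⟨a, rest⟩
  · simp [bfMatchedAt, h'] at hmatch
  · obtain ⟨a', rest', h, ha'⟩ :=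
      exists_extractMin_le_of_mem (hsub (mem_of_extractMin_eq_some h'))
    simp only [bfMatchedAt, h, h'] at hmatch ⊢
    exact ha'.trans hmatch

end PoolSubset

theorem buyer_no_benefit_from_delay_general (asks others : List ℝ)
    (v : ℝ) (p' p : ℕ) (hpp : p' < p) :
    buyerUtil asks (others.take p) v v ≤ buyerUtil asks (others.take p') v v ∧
    (bfMatchedAt asks (others.take p) v →
      bfMatchedAt asks (others.take p') v ∧
      ∀ a ∈ (extractMin (bfRun asks (others.take p)).unmatchedAsks).map Prod.fst,
        ∀ a' ∈ (extractMin (bfRun asks (others.take p')).unmatchedAsks).map Prod.fst,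
          a' ≤ a) := by
  have hsub := bfRun_take_unmatchedAsks_subset_of_le asks others hpp.le
  exact ⟨buyerUtil_le_of_subset hsub v,
    fun hmatch => ⟨bfMatchedAt_of_subset hsub hmatch, extractMin_fst_le_of_subset hsub⟩⟩

/-- In `M_greedy`, a buyer never benefits from delaying his
arrival: fixing the asks and the other bids `others` in arrival order, if his
bid of value `v` is inserted at position `p'` or at a later position `p`, his
utility at position `p'` is at least his utility at position `p`; in
particular, if he is matched at position `p` then he is also matched at
position `p'`, with a payment that is no larger. -/
theorem buyer_no_benefit_from_delay (asks others : List ℝ)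
    (ha : ∀ x ∈ asks, 0 ≤ x) (ho : ∀ x ∈ others, 0 ≤ x)
    (v : ℝ) (hv : 0 ≤ v) (p' p : ℕ) (hpp : p' < p) (hp : p ≤ others.length) :
    buyerUtil asks (others.take p) v v ≤ buyerUtil asks (others.take p') v v ∧
    (bfMatchedAt asks (others.take p) v →
      bfMatchedAt asks (others.take p') v ∧
      ∀ a ∈ (extractMin (bfRun asks (others.take p)).unmatchedAsks).map Prod.fst,
        ∀ a' ∈ (extractMin (bfRun asks (others.take p')).unmatchedAsks).map Prod.fst,
          a' ≤ a) :=
  buyer_no_benefit_from_delay_general asks others v p' p hpp
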